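/- Let d be a martingale and define oracle martingales h and g by h^Y(λ)=g^X(λ)=d(λ)=1, h^Y(X↾n) = [d((X⊎Y)↾(2n−1)) / d((X⊎Y)↾(2n−2))] · h^Y(X↾(n−1)), and g^X(Y↾n) = [d((X⊎Y)↾2n) / d((X⊎Y)↾(2n−1))] · g^X(Y↾(n−1)) (assuming d is strictly positive along X⊎Y). Then h^Y(X↾n) · g^X(Y↾n) = d((X⊎Y)↾2n) for all n, and for every fixed Y the function σ ↦ h^Y(σ) is a martingale, and for every fixed X the function τ ↦ g^X(τ) is a martingale. -/

import Mathlib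

def pre (X : ℕ → Bool) (n : ℕ) : List Bool := List.ofFn (fun i : Fin n => X i)

def interleave (A B : ℕ → Bool) : ℕ → Bool :=
  fun n => if n % 2 = 0 then A (n / 2) else B (n / 2)

/-- Interleaving of two strings, taking bits alternately starting with the first list:
`ilv σ τ = σ₀τ₀σ₁τ₁…`. -/
def ilv : List Bool → List Bool → List Bool
  | [], τ => τ
  | a :: σ, τ => a :: ilv τ σ
termination_by σ τ => σ.length + τ.length
decreasing_by simp; omega

/-! Both recursions append one bit to the interleaved string on which `d` is read:
`h^Y(σb) = d(wb)/d(w) · h^Y(σ)` with `w = ilv σ (Y↾|σ|)`, and likewise for `g^X`. Any `f` of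
this shape inherits nonnegativity and the martingale equality from `d`. In the product
`h^Y(X↾n) · g^X(Y↾n)` the ratios telescope to `d(ilv (X↾n) (Y↾n)) = d((X⊎Y)↾2n)`. -/

@[simp]
lemma pre_length (X : ℕ → Bool) (n : ℕ) : (pre X n).length = n := List.length_ofFn

lemma pre_succ (X : ℕ → Bool) (n : ℕ) : pre X (n + 1) = pre X n ++ [X n] := by
  simp only [pre, List.ofFn_succ', List.concat_eq_append, Fin.val_castSucc, Fin.val_last]

@[simp]
lemma ilv_nil (τ : List Bool) : ilv [] τ = τ := by
  rw [ilv]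

@[simp]
lemma ilv_cons (a : Bool) (σ τ : List Bool) : ilv (a :: σ) τ = a :: ilv τ σ := by
  rw [ilv]

lemma ilv_append_singleton_left {σ τ : List Bool} (b : Bool) (h : τ.length = σ.length) :
    ilv (σ ++ [b]) τ = ilv σ τ ++ [b] := by
  induction σ generalizing τ with
  | nil => simp [List.eq_nil_of_length_eq_zero h]
  | cons a σ ih =>
    obtain _ | ⟨c, τ⟩ := τ
    · simp at h
    · simp [ih (by simpa using h)]

lemma ilv_append_singleton_right {σ τ : List Bool} (b : Bool) (h : σ.length = τ.length + 1) :
    ilv σ (τ ++ [b]) = ilv σ τ ++ [b] := by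
  induction σ generalizing τ with
  | nil => simp at h
  | cons a σ ih =>
    obtain _ | ⟨c, τ⟩ := τ
    · simp_all
    · simp [ih (by simpa using h)]

lemma pre_interleave_two_mul (X Y : ℕ → Bool) (n : ℕ) :
    pre (interleave X Y) (2 * n) = ilv (pre X n) (pre Y n) := by
  induction n with
  | zero => simp [pre]
  | succ n ih =>
    have hX : interleave X Y (2 * n) = X n := by simp [interleave]
    have hY : interleave X Y (2 * n + 1) = Y n := by simp [interleave, Nat.mul_add_div]
    rw [Nat.mul_succ, pre_succ, pre_succ, ih, hX, hY, pre_succ, pre_succ,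
      ilv_append_singleton_right _ (by simp), ilv_append_singleton_left _ (by simp)]

section Telescoping

variable {d f : List Bool → ℝ}

lemma nonneg_of_append_singleton_eq_ratio_mul {w : List Bool → List Bool} (hd : ∀ σ, 0 ≤ d σ)
    (hf0 : 0 ≤ f []) (hf : ∀ σ b, f (σ ++ [b]) = d (w σ ++ [b]) / d (w σ) * f σ) (σ : List Bool) :
    0 ≤ f σ := by
  induction σ using List.reverseRecOn with
  | nil => exact hf0
  | append_singleton σ b ih =>
    rw [hf]
    exact mul_nonneg (div_nonneg (hd _) (hd _)) ih

lemma fair_of_append_singleton_eq_ratio_mul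
    (hmart : ∀ σ, d (σ ++ [false]) + d (σ ++ [true]) = 2 * d σ) {σ v : List Bool}
    (hv : d v ≠ 0) (hf : ∀ b, f (σ ++ [b]) = d (v ++ [b]) / d v * f σ) :
    f (σ ++ [false]) + f (σ ++ [true]) = 2 * f σ := by
  rw [hf, hf, ← add_mul, ← add_div, hmart, mul_div_cancel_right₀ _ hv]

end Telescoping

lemma mul_eq_ilv_pre {d hY gX : List Bool → ℝ} {X Y : ℕ → Bool} (hd : ∀ σ, d σ ≠ 0)
    (hd0 : d [] = 1) (hh0 : hY [] = 1) (hg0 : gX [] = 1)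
    (hhrec : ∀ σ b, hY (σ ++ [b]) =
      d (ilv (σ ++ [b]) (pre Y σ.length)) / d (ilv σ (pre Y σ.length)) * hY σ)
    (hgrec : ∀ τ b, gX (τ ++ [b]) =
      d (ilv (pre X (τ.length + 1)) (τ ++ [b])) / d (ilv (pre X (τ.length + 1)) τ) * gX τ)
    (n : ℕ) : hY (pre X n) * gX (pre Y n) = d (ilv (pre X n) (pre Y n)) := by
  induction n with
  | zero => simp [pre, hh0, hg0, hd0]
  | succ n ih =>
    rw [pre_succ X, hhrec, pre_succ Y, hgrec, pre_length, pre_length, ← pre_succ]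
    have hmid := hd (ilv (pre X (n + 1)) (pre Y n))
    have hprev := hd (ilv (pre X n) (pre Y n))
    field_simp
    rw [← ih]
    ring

/-- Let `d` be a strictly positive martingale and define the oracle
functions `h` and `g` telescopically: `h^Y(λ) = g^X(λ) = d(λ) = 1`,
`h^Y(X↾n) = [d((X⊎Y)↾(2n−1))/d((X⊎Y)↾(2n−2))]·h^Y(X↾(n−1))` and
`g^X(Y↾n) = [d((X⊎Y)↾2n)/d((X⊎Y)↾(2n−1))]·g^X(Y↾(n−1))`. Then
`h^Y(X↾n)·g^X(Y↾n) = d((X⊎Y)↾2n)` for all `n`, and for each fixed `Y` (resp. `X`) the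
function `σ ↦ h^Y(σ)` (resp. `τ ↦ g^X(τ)`) is a martingale. -/
theorem stmt_16 (d : List Bool → ℝ) (hpos : ∀ σ, 0 < d σ) (hd0 : d [] = 1)
    (hmart : ∀ σ, d (σ ++ [false]) + d (σ ++ [true]) = 2 * d σ)
    (h g : (ℕ → Bool) → List Bool → ℝ)
    (hh0 : ∀ Y, h Y [] = 1) (hg0 : ∀ X, g X [] = 1)
    (hhrec : ∀ (Y : ℕ → Bool) (σ : List Bool) (b : Bool),
      h Y (σ ++ [b]) =
        d (ilv (σ ++ [b]) (pre Y σ.length)) / d (ilv σ (pre Y σ.length)) * h Y σ)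
    (hgrec : ∀ (X : ℕ → Bool) (τ : List Bool) (b : Bool),
      g X (τ ++ [b]) =
        d (ilv (pre X (τ.length + 1)) (τ ++ [b])) /
          d (ilv (pre X (τ.length + 1)) τ) * g X τ) :
    (∀ (X Y : ℕ → Bool) (n : ℕ),
      h Y (pre X n) * g X (pre Y n) = d (pre (interleave X Y) (2 * n))) ∧
    (∀ Y : ℕ → Bool, (∀ σ, 0 ≤ h Y σ) ∧
      ∀ σ, h Y (σ ++ [false]) + h Y (σ ++ [true]) = 2 * h Y σ) ∧
    (∀ X : ℕ → Bool, (∀ τ, 0 ≤ g X τ) ∧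
      ∀ τ, g X (τ ++ [false]) + g X (τ ++ [true]) = 2 * g X τ) := by
  have hstep Y σ b : h Y (σ ++ [b]) =
      d (ilv σ (pre Y σ.length) ++ [b]) / d (ilv σ (pre Y σ.length)) * h Y σ := by
    rw [hhrec, ilv_append_singleton_left _ (pre_length _ _)]
  have gstep X τ b : g X (τ ++ [b]) =
      d (ilv (pre X (τ.length + 1)) τ ++ [b]) / d (ilv (pre X (τ.length + 1)) τ) * g X τ := by
    rw [hgrec, ilv_append_singleton_right _ (pre_length _ _)]
  refine ⟨fun X Y n => ?_, fun Y => ⟨?_, fun σ => ?_⟩, fun X => ⟨?_, fun τ => ?_⟩⟩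
  · rw [pre_interleave_two_mul]
    exact mul_eq_ilv_pre (fun σ => (hpos σ).ne') hd0 (hh0 Y) (hg0 X) (hhrec Y) (hgrec X) n
  · exact nonneg_of_append_singleton_eq_ratio_mul (fun σ => (hpos σ).le) (hh0 Y ▸ zero_le_one) (hstep Y)
  · exact fair_of_append_singleton_eq_ratio_mul hmart (hpos _).ne' (hstep Y σ)
  · exact nonneg_of_append_singleton_eq_ratio_mul (fun τ => (hpos τ).le) (hg0 X ▸ zero_le_one) (gstep X)
  · exact fair_of_append_singleton_eq_ratio_mul hmart (hpos _).ne' (gstep X τ)
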